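/- For 0 ≤ λ < 1 and unit vector μ₀ = (μ₁, μ₂ᵀ)ᵀ ∈ ℝ^q, the matrix A = [[1+λ²-2λμ₁, -2λμ₂ᵀ],[-2λμ₂, (1+λ²+2λμ₁)I_{q-1}]] is positive definite. -/

import Mathlib

/-!
Writing `A λ` for the matrix, `A λ = (1 - λ)² • 1 + λ • A 1`, so it suffices that `A 1` is
positive semidefinite. Its quadratic form at `(x₀, y)` is twice
`(1 - μ₁) x₀² - 2 ⟪μ₂, y⟫ x₀ + (1 + μ₁) ‖y‖²`, a quadratic in `x₀` whose discriminant is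
`⟪μ₂, y⟫² - (1 - μ₁²) ‖y‖² ≤ 0` by Cauchy–Schwarz, since `‖μ₂‖² ≤ 1 - μ₁²`.
-/

open Matrix

/-- The block matrix A = [[1+λ²-2λμ₁, -2λμ₂ᵀ],[-2λμ₂, (1+λ²+2λμ₁)I]]. -/
def halfAngleMatrix (n : ℕ) (lam μ₁ : ℝ) (μ₂ : Fin n → ℝ) :
    Matrix (Fin (n + 1)) (Fin (n + 1)) ℝ :=
  Matrix.of
    (Fin.cons (Fin.cons (1 + lam ^ 2 - 2 * lam * μ₁) (fun j => -2 * lam * μ₂ j))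
      (fun i => Fin.cons (-2 * lam * μ₂ i)
        (fun j => if i = j then 1 + lam ^ 2 + 2 * lam * μ₁ else 0)))

section OrderedRing

variable {R : Type*} [CommRing R] [LinearOrder R] [IsStrictOrderedRing R]

theorem dotProduct_self_nonneg {ι : Type*} [Fintype ι] (v : ι → R) : 0 ≤ v ⬝ᵥ v :=
  Finset.sum_nonneg fun i _ => mul_self_nonneg (v i)

theorem sq_dotProduct_le {ι : Type*} [Fintype ι] (u v : ι → R) :
    (u ⬝ᵥ v) ^ 2 ≤ (u ⬝ᵥ u) * (v ⬝ᵥ v) := by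
  simpa only [dotProduct, sq] using Finset.sum_mul_sq_le_sq_mul_sq Finset.univ u v

theorem quadratic_nonneg_of_sq_le {a b c : R} (ha : 0 ≤ a) (hc : 0 ≤ c) (h : b ^ 2 ≤ a * c)
    (x : R) : 0 ≤ a * x ^ 2 - 2 * b * x + c := by
  rcases ha.eq_or_lt with rfl | ha
  · nlinarith [sq_nonneg b]
  · have : 0 ≤ a * (a * x ^ 2 - 2 * b * x + c) := by nlinarith [sq_nonneg (a * x - b)]
    exact (mul_nonneg_iff_of_pos_left ha).1 this

end OrderedRing

namespace halfAngleMatrix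

variable (n : ℕ) (lam μ₁ : ℝ) (μ₂ : Fin n → ℝ)

theorem isHermitian : (halfAngleMatrix n lam μ₁ μ₂).IsHermitian := by
  ext i j
  refine Fin.cases ?_ (fun i => ?_) i <;> refine Fin.cases ?_ (fun j => ?_) j <;>
    simp [halfAngleMatrix, eq_comm]

theorem eq_smul_one_add_smul :
    halfAngleMatrix n lam μ₁ μ₂ = (1 - lam) ^ 2 • 1 + lam • halfAngleMatrix n 1 μ₁ μ₂ := by
  ext i j
  refine Fin.cases ?_ (fun i => ?_) i <;> refine Fin.cases ?_ (fun j => ?_) j <;>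
    simp [halfAngleMatrix, Matrix.one_apply, (Fin.succ_ne_zero _).symm] <;> try split_ifs
  all_goals ring

theorem mulVec_cons (x₀ : ℝ) (y : Fin n → ℝ) :
    halfAngleMatrix n lam μ₁ μ₂ *ᵥ Fin.cons x₀ y =
      Fin.cons ((1 + lam ^ 2 - 2 * lam * μ₁) * x₀ - 2 * lam * (μ₂ ⬝ᵥ y))
        (-(2 * lam * x₀) • μ₂ + (1 + lam ^ 2 + 2 * lam * μ₁) • y) := by
  ext i
  refine Fin.cases ?_ (fun i => ?_) i
  · simp [halfAngleMatrix, mulVec, dotProduct, Fin.sum_univ_succ, Finset.mul_sum, mul_assoc,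
      sub_eq_add_neg]
  · simp [halfAngleMatrix, mulVec, dotProduct, Fin.sum_univ_succ]
    ring

theorem dotProduct_mulVec_cons (x₀ : ℝ) (y : Fin n → ℝ) :
    Fin.cons x₀ y ⬝ᵥ (halfAngleMatrix n lam μ₁ μ₂ *ᵥ Fin.cons x₀ y) =
      (1 + lam ^ 2 - 2 * lam * μ₁) * x₀ ^ 2 - 4 * lam * (μ₂ ⬝ᵥ y) * x₀
        + (1 + lam ^ 2 + 2 * lam * μ₁) * (y ⬝ᵥ y) := by
  rw [mulVec_cons, ← vecCons, ← vecCons, cons_dotProduct_cons, dotProduct_add, dotProduct_smul,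
    dotProduct_smul, dotProduct_comm y μ₂, smul_eq_mul, smul_eq_mul]
  ring

theorem posSemidef_at_one {μ₁ : ℝ} {μ₂ : Fin n → ℝ} (hμ : μ₁ ^ 2 + μ₂ ⬝ᵥ μ₂ ≤ 1) :
    (halfAngleMatrix n 1 μ₁ μ₂).PosSemidef := by
  refine posSemidef_iff_dotProduct_mulVec.2 ⟨isHermitian n 1 μ₁ μ₂, fun x => ?_⟩
  rw [star_trivial, ← Fin.cons_self_tail x, dotProduct_mulVec_cons]
  set y := Fin.tail x
  have hμ₂ : 0 ≤ μ₂ ⬝ᵥ μ₂ := dotProduct_self_nonneg μ₂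
  have hμ₁ : μ₁ ^ 2 ≤ 1 := by linarith
  have hCS : (μ₂ ⬝ᵥ y) ^ 2 ≤ (1 - μ₁) * ((1 + μ₁) * (y ⬝ᵥ y)) := by
    nlinarith [sq_dotProduct_le μ₂ y, dotProduct_self_nonneg y]
  have hq := quadratic_nonneg_of_sq_le (by nlinarith)
    (mul_nonneg (by nlinarith) (dotProduct_self_nonneg y)) hCS (x 0)
  linarith

end halfAngleMatrix

theorem halfAngleMatrix_posDef (n : ℕ) (lam : ℝ) (h0 : 0 ≤ lam) (h1 : lam < 1)
    (μ₁ : ℝ) (μ₂ : Fin n → ℝ) (hμ : μ₁ ^ 2 + μ₂ ⬝ᵥ μ₂ = 1) :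
    (halfAngleMatrix n lam μ₁ μ₂).PosDef := by
  rw [halfAngleMatrix.eq_smul_one_add_smul]
  exact (PosDef.one.smul (by nlinarith)).add_posSemidef
    ((halfAngleMatrix.posSemidef_at_one n hμ.le).smul h0)
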